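/- arXiv:1801.10444 — 4 statements merged into one kernel-verified Lean document; each statement's English description precedes it below -/
import Mathlib

section
/- Let A₀, A₁ be Hermitian operators on a Hilbert space H_A with A₀² = A₁² = I, and B₀, B₁ Hermitian operators on H_B with B₀² = B₁² = I. Then the CHSH operator S = A₀⊗B₀ + A₀⊗B₁ + A₁⊗B₀ − A₁⊗B₁ satisfies S² = 4·I + [A₀,A₁]⊗[B₁,B₀], and hence ‖S‖ ≤ 2√2 (Tsirelson's bound). -/
open Matrix Kronecker

noncomputable section

lemma kron_conjT {nA nB : ℕ} (X : Matrix (Fin nA) (Fin nA) ℂ)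
    (Y : Matrix (Fin nB) (Fin nB) ℂ) : (X ⊗ₖ Y)ᴴ = Xᴴ ⊗ₖ Yᴴ := by
  ext ⟨i, j⟩ ⟨k, l⟩
  simp [conjTranspose_apply, kroneckerMap_apply, mul_comm]

lemma sub_kron' {l m n p : Type*} (X Y : Matrix l m ℂ) (Z : Matrix n p ℂ) :
    (X - Y) ⊗ₖ Z = X ⊗ₖ Z - Y ⊗ₖ Z := by
  ext ⟨i, j⟩ ⟨k, l⟩
  simp [kroneckerMap_apply, sub_mul]

lemma kron_sub' {l m n p : Type*} (X : Matrix l m ℂ) (Y Z : Matrix n p ℂ) :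
    X ⊗ₖ (Y - Z) = X ⊗ₖ Y - X ⊗ₖ Z := by
  ext ⟨i, j⟩ ⟨k, l⟩
  simp [kroneckerMap_apply, mul_sub]

lemma clm_norm_le_one_of_unitary {n : Type*} [Fintype n] [DecidableEq n]
    (a : EuclideanSpace ℂ n →L[ℂ] EuclideanSpace ℂ n) (h : star a * a = 1) : ‖a‖ ≤ 1 := by
  have h1 : ‖a‖ * ‖a‖ = ‖star a * a‖ := (CStarRing.norm_star_mul_self (x := a)).symm
  rw [h] at h1
  have h2 : ‖(1 : EuclideanSpace ℂ n →L[ℂ] EuclideanSpace ℂ n)‖ ≤ 1 := by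
    rw [show (1 : EuclideanSpace ℂ n →L[ℂ] EuclideanSpace ℂ n) = ContinuousLinearMap.id ℂ _ from rfl]; exact ContinuousLinearMap.norm_id_le
  nlinarith [norm_nonneg a]

set_option maxHeartbeats 1000000 in
set_option synthInstance.maxHeartbeats 400000 in
/-- Tsirelson: for ±1-outcome observables `A₀,A₁` on `H_A` and `B₀,B₁` on `H_B`, the CHSH
operator `S = A₀⊗B₀ + A₀⊗B₁ + A₁⊗B₀ − A₁⊗B₁` satisfies
`S² = 4·I + [A₀,A₁]⊗[B₁,B₀]` and `‖S‖ ≤ 2√2` (as an operator on `ℓ²`). -/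
theorem chsh_operator_sq_and_tsirelson {nA nB : ℕ}
    (A₀ A₁ : Matrix (Fin nA) (Fin nA) ℂ) (B₀ B₁ : Matrix (Fin nB) (Fin nB) ℂ)
    (hA₀ : A₀.IsHermitian) (hA₁ : A₁.IsHermitian)
    (hB₀ : B₀.IsHermitian) (hB₁ : B₁.IsHermitian)
    (hA₀sq : A₀ * A₀ = 1) (hA₁sq : A₁ * A₁ = 1)
    (hB₀sq : B₀ * B₀ = 1) (hB₁sq : B₁ * B₁ = 1) :
    (A₀ ⊗ₖ B₀ + A₀ ⊗ₖ B₁ + A₁ ⊗ₖ B₀ - A₁ ⊗ₖ B₁) *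
        (A₀ ⊗ₖ B₀ + A₀ ⊗ₖ B₁ + A₁ ⊗ₖ B₀ - A₁ ⊗ₖ B₁) =
      (4 : ℂ) • (1 : Matrix (Fin nA × Fin nB) (Fin nA × Fin nB) ℂ) +
        (A₀ * A₁ - A₁ * A₀) ⊗ₖ (B₁ * B₀ - B₀ * B₁) ∧
    ∀ v : EuclideanSpace ℂ (Fin nA × Fin nB),
      ‖Matrix.toEuclideanLin (A₀ ⊗ₖ B₀ + A₀ ⊗ₖ B₁ + A₁ ⊗ₖ B₀ - A₁ ⊗ₖ B₁) v‖ ≤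
        2 * Real.sqrt 2 * ‖v‖ := by
  set S := A₀ ⊗ₖ B₀ + A₀ ⊗ₖ B₁ + A₁ ⊗ₖ B₀ - A₁ ⊗ₖ B₁ with hSdef
  have key : S * S =
      (4 : ℂ) • (1 : Matrix (Fin nA × Fin nB) (Fin nA × Fin nB) ℂ) +
        (A₀ * A₁ - A₁ * A₀) ⊗ₖ (B₁ * B₀ - B₀ * B₁) := by
    simp only [hSdef, add_mul, mul_add, sub_mul, mul_sub, ← Matrix.mul_kronecker_mul,
      sub_kron', kron_sub', hA₀sq, hA₁sq, hB₀sq, hB₁sq,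
      Matrix.one_kronecker_one]
    have : ((4 : ℂ) • (1 : Matrix (Fin nA × Fin nB) (Fin nA × Fin nB) ℂ)) = 1 + 1 + 1 + 1 := by
      rw [show (4:ℂ) = 1+1+1+1 by norm_num]
      simp [add_smul]
    rw [this]
    abel
  refine ⟨key, ?_⟩
  -- move to CLM
  set f := Matrix.toEuclideanCLM (n := Fin nA × Fin nB) (𝕜 := ℂ)
  have hstar : ∀ (X Y : Matrix (Fin nA) (Fin nA) ℂ) (Z W : Matrix (Fin nB) (Fin nB) ℂ),
      X.IsHermitian → Y.IsHermitian → Z.IsHermitian → W.IsHermitian →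
      Y * Y = 1 → X * X = 1 → W * W = 1 → Z * Z = 1 →
      ‖f ((X * Y) ⊗ₖ (Z * W))‖ ≤ 1 := by
    intro X Y Z W hX hY hZ hW hY2 hX2 hW2 hZ2
    apply clm_norm_le_one_of_unitary
    rw [← map_star, ← _root_.map_mul, ← _root_.map_one f]
    congr 1
    have : star ((X * Y) ⊗ₖ (Z * W)) = (Y * X) ⊗ₖ (W * Z) := by
      show ((X * Y) ⊗ₖ (Z * W))ᴴ = _
      rw [kron_conjT, Matrix.conjTranspose_mul, Matrix.conjTranspose_mul,
        hX.eq, hY.eq, hZ.eq, hW.eq]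
    rw [this, ← Matrix.mul_kronecker_mul, ← Matrix.one_kronecker_one]
    have e1 : Y * X * (X * Y) = 1 := by
      calc Y * X * (X * Y) = Y * (X * X) * Y := by noncomm_ring
        _ = 1 := by rw [hX2, mul_one, hY2]
    have e2 : W * Z * (Z * W) = 1 := by
      calc W * Z * (Z * W) = W * (Z * Z) * W := by noncomm_ring
        _ = 1 := by rw [hZ2, mul_one, hW2]
    rw [e1, e2]
  have hC : ‖f ((A₀ * A₁ - A₁ * A₀) ⊗ₖ (B₁ * B₀ - B₀ * B₁))‖ ≤ 4 := by
    have e : (A₀ * A₁ - A₁ * A₀) ⊗ₖ (B₁ * B₀ - B₀ * B₁) =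
        (A₀ * A₁) ⊗ₖ (B₁ * B₀) - (A₀ * A₁) ⊗ₖ (B₀ * B₁)
          - ((A₁ * A₀) ⊗ₖ (B₁ * B₀) - (A₁ * A₀) ⊗ₖ (B₀ * B₁)) := by
      rw [sub_kron', kron_sub', kron_sub']
    rw [e]
    simp only [map_sub]
    have h1 := hstar A₀ A₁ B₁ B₀ hA₀ hA₁ hB₁ hB₀ hA₁sq hA₀sq hB₀sq hB₁sq
    have h2 := hstar A₀ A₁ B₀ B₁ hA₀ hA₁ hB₀ hB₁ hA₁sq hA₀sq hB₁sq hB₀sq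
    have h3 := hstar A₁ A₀ B₁ B₀ hA₁ hA₀ hB₁ hB₀ hA₀sq hA₁sq hB₀sq hB₁sq
    have h4 := hstar A₁ A₀ B₀ B₁ hA₁ hA₀ hB₀ hB₁ hA₀sq hA₁sq hB₁sq hB₀sq
    calc ‖f ((A₀ * A₁) ⊗ₖ (B₁ * B₀)) - f ((A₀ * A₁) ⊗ₖ (B₀ * B₁))
          - (f ((A₁ * A₀) ⊗ₖ (B₁ * B₀)) - f ((A₁ * A₀) ⊗ₖ (B₀ * B₁)))‖
        ≤ ‖f ((A₀ * A₁) ⊗ₖ (B₁ * B₀)) - f ((A₀ * A₁) ⊗ₖ (B₀ * B₁))‖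
          + ‖f ((A₁ * A₀) ⊗ₖ (B₁ * B₀)) - f ((A₁ * A₀) ⊗ₖ (B₀ * B₁))‖ := norm_sub_le _ _
      _ ≤ (‖f ((A₀ * A₁) ⊗ₖ (B₁ * B₀))‖ + ‖f ((A₀ * A₁) ⊗ₖ (B₀ * B₁))‖)
          + (‖f ((A₁ * A₀) ⊗ₖ (B₁ * B₀))‖ + ‖f ((A₁ * A₀) ⊗ₖ (B₀ * B₁))‖) :=
          add_le_add (norm_sub_le _ _) (norm_sub_le _ _)
      _ ≤ 4 := by linarith
  have hSherm : star S = S := by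
    show Sᴴ = S
    simp only [hSdef, Matrix.conjTranspose_add, Matrix.conjTranspose_sub, kron_conjT,
      hA₀.eq, hA₁.eq, hB₀.eq, hB₁.eq]
  have hnorm2 : ‖f S‖ * ‖f S‖ ≤ 8 := by
    have heq : ‖f S‖ * ‖f S‖ = ‖star (f S) * f S‖ := (CStarRing.norm_star_mul_self (x := f S)).symm
    rw [heq, ← map_star, hSherm, ← _root_.map_mul, key, map_add, _root_.map_smul f]
    have h1 : ‖(4 : ℂ) • f 1‖ ≤ 4 := by
      have hone : ‖f (1 : Matrix (Fin nA × Fin nB) (Fin nA × Fin nB) ℂ)‖ ≤ 1 := by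
        rw [_root_.map_one f]
        rw [show (1 : EuclideanSpace ℂ (Fin nA × Fin nB) →L[ℂ] _) = ContinuousLinearMap.id ℂ _
          from rfl]
        exact ContinuousLinearMap.norm_id_le
      calc ‖(4 : ℂ) • f 1‖ ≤ ‖(4 : ℂ)‖ * ‖f 1‖ := ContinuousLinearMap.opNorm_smul_le _ _
        _ ≤ 4 := by
            simp only [Complex.norm_ofNat]
            nlinarith [norm_nonneg (f (1 : Matrix (Fin nA × Fin nB) (Fin nA × Fin nB) ℂ))]
    calc ‖(4 : ℂ) • f 1 + f ((A₀ * A₁ - A₁ * A₀) ⊗ₖ (B₁ * B₀ - B₀ * B₁))‖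
        ≤ ‖(4 : ℂ) • f 1‖ + ‖f ((A₀ * A₁ - A₁ * A₀) ⊗ₖ (B₁ * B₀ - B₀ * B₁))‖ := norm_add_le _ _
      _ ≤ 8 := by linarith
  have hSnorm : ‖f S‖ ≤ 2 * Real.sqrt 2 := by
    nlinarith [Real.sq_sqrt (by norm_num : (2:ℝ) ≥ 0), Real.sqrt_nonneg 2, norm_nonneg (f S)]
  intro v
  have hv : Matrix.toEuclideanLin S v = f S v := rfl
  rw [hv]
  calc ‖f S v‖ ≤ ‖f S‖ * ‖v‖ := (f S).le_opNorm v
    _ ≤ 2 * Real.sqrt 2 * ‖v‖ := by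
        exact mul_le_mul_of_nonneg_right hSnorm (norm_nonneg v)
end
end

section
/- If three Hermitian operators X, Y, Z on ℂ² satisfy X² = Y² = Z² = I and pairwise anticommute (XY = −YX, XZ = −ZX, YZ = −ZY), then there exists a unitary U on ℂ² such that UXU† = σx, UZU† = σz, and UYU† = ±σy. -/
/-!
`Z` is a Hermitian involution, and `Z ≠ -1` because `X` anticommutes with it, so `Z` has a unit
eigenvector `v` with eigenvalue `1`. Then `X v` is a unit eigenvector of `Z` with eigenvalue `-1`,
and in the orthonormal basis `v, X v` the matrices `X` and `Z` become `σx` and `σz`. The conjugated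
`Y` anticommutes with `σx` and `σz`, hence is a multiple `c σy`, and `Y² = 1` forces `c = ±1`.
-/

open Matrix

noncomputable section

def σz : Matrix (Fin 2) (Fin 2) ℂ := !![1, 0; 0, -1]
def σx : Matrix (Fin 2) (Fin 2) ℂ := !![0, 1; 1, 0]
def σy : Matrix (Fin 2) (Fin 2) ℂ := !![0, -Complex.I; Complex.I, 0]

namespace Matrix

variable {n : Type*} [Fintype n]

theorem ne_neg_one_of_mul_eq_neg_mul {R : Type*} [Ring R] [IsAddTorsionFree R] [Nontrivial R]
    [DecidableEq n] [Nonempty n] {X Z : Matrix n n R} (hX : X * X = 1) (hXZ : X * Z = -(Z * X)) :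
    Z ≠ -1 := by
  rintro rfl
  have hX0 : X = 0 := by
    have h : -X = X := by simpa using hXZ
    ext i j
    exact neg_eq_self.mp (congrFun₂ h i j)
  simp [hX0] at hX

theorem exists_mulVec_eq_self_of_mul_self_eq_one {R : Type*} [Ring R] [DecidableEq n]
    {Z : Matrix n n R} (hZ : Z * Z = 1) (hZne : Z ≠ -1) : ∃ v ≠ 0, Z *ᵥ v = v := by
  -- `Z * (1 + Z) = 1 + Z`, so every column of `1 + Z` is fixed by `Z`.
  obtain ⟨i, hi⟩ : ∃ i, (1 + Z) *ᵥ Pi.single i 1 ≠ 0 := by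
    by_contra! h
    exact hZne <| eq_neg_of_add_eq_zero_right <|
      ext_of_mulVec_single fun i => by rw [h i, zero_mulVec]
  refine ⟨_, hi, ?_⟩
  rw [mulVec_mulVec, mul_add, mul_one, hZ, add_comm]

open scoped ComplexOrder in
theorem exists_star_smul_dotProduct_smul_eq_one {𝕜 : Type*} [RCLike 𝕜] {v : n → 𝕜}
    (hv : v ≠ 0) : ∃ c : 𝕜, star (c • v) ⬝ᵥ (c • v) = 1 := by
  obtain ⟨r, hr, hvr⟩ := RCLike.pos_iff_exists_ofReal.mp (dotProduct_star_self_pos_iff.mpr hv)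
  refine ⟨((√r)⁻¹ : ℝ), ?_⟩
  rw [star_smul, smul_dotProduct, dotProduct_smul, ← hvr]
  have h : (√r)⁻¹ * ((√r)⁻¹ * r) = 1 := by
    rw [← mul_assoc, ← mul_inv, Real.mul_self_sqrt hr.le, inv_mul_cancel₀ hr.ne']
  simp only [RCLike.star_def, RCLike.conj_ofReal, smul_eq_mul]
  exact_mod_cast h

theorem star_mulVec_dotProduct_mulVec_of_mem_unitaryGroup {R : Type*} [CommRing R] [StarRing R]
    [DecidableEq n] {U : Matrix n n R} (hU : U ∈ unitaryGroup n R) (v w : n → R) :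
    star (U *ᵥ v) ⬝ᵥ (U *ᵥ w) = star v ⬝ᵥ w := by
  rw [star_mulVec, ← dotProduct_mulVec, mulVec_mulVec, ← star_eq_conjTranspose,
    mem_unitaryGroup_iff'.mp hU, one_mulVec]

theorem IsHermitian.star_mulVec_dotProduct {R : Type*} [Semiring R] [StarRing R]
    {Z : Matrix n n R} (hZ : Z.IsHermitian) (v w : n → R) :
    star (Z *ᵥ v) ⬝ᵥ w = star v ⬝ᵥ (Z *ᵥ w) := by
  rw [star_mulVec, hZ.eq, dotProduct_mulVec]

theorem IsHermitian.star_dotProduct_eq_zero_of_mulVec_eq_neg {R : Type*} [Ring R]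
    [StarRing R] [IsAddTorsionFree R] {Z : Matrix n n R} (hZ : Z.IsHermitian) {v w : n → R}
    (hv : Z *ᵥ v = v) (hw : Z *ᵥ w = -w) : star v ⬝ᵥ w = 0 := by
  have h := hZ.star_mulVec_dotProduct v w
  rw [hv, hw, dotProduct_neg] at h
  exact self_eq_neg.mp h

theorem conjTranspose_mul_mul_apply {m R : Type*} [Fintype m] [Semiring R] [StarRing R]
    (V : Matrix n m R) (W : Matrix n n R) (a b : m) :
    (Vᴴ * W * V) a b = star (Vᵀ a) ⬝ᵥ (W *ᵥ Vᵀ b) := by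
  simp only [mul_apply, mulVec, dotProduct, Finset.sum_mul, Finset.mul_sum]
  rw [Finset.sum_comm]
  simp [mul_assoc]

end Matrix

theorem σy_mul_σy : σy * σy = 1 := by
  rw [σy, one_fin_two]
  simp

theorem eq_smul_σy_of_anticomm {B : Matrix (Fin 2) (Fin 2) ℂ} (hBx : B * σx = -(σx * B))
    (hBz : B * σz = -(σz * B)) : B = (Complex.I * B 0 1) • σy := by
  have h00 : B 0 0 = -B 0 0 := by
    simpa [σz, mul_apply, vecMul, dotProduct, Fin.sum_univ_two] using congrFun₂ hBz 0 0
  have h11 : -B 1 1 = B 1 1 := by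
    simpa [σz, mul_apply, vecMul, dotProduct, Fin.sum_univ_two] using congrFun₂ hBz 1 1
  have h01 : B 0 1 = -B 1 0 := by
    simpa [σx, mul_apply, vecMul, dotProduct, Fin.sum_univ_two] using congrFun₂ hBx 0 0
  ext i j
  fin_cases i <;> fin_cases j <;>
    simp only [Fin.zero_eta, Fin.mk_one, Fin.isValue, σy, Matrix.smul_apply, of_apply, cons_val',
      cons_val_zero, cons_val_one, cons_val_fin_one, smul_eq_mul, mul_zero, mul_neg]
  · linear_combination h00 / 2
  · linear_combination B 0 1 * Complex.I_sq
  · linear_combination h01 - B 0 1 * Complex.I_sq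
  · linear_combination -h11 / 2

theorem eq_σy_or_eq_neg_σy_of_anticomm {B : Matrix (Fin 2) (Fin 2) ℂ} (hB : B * B = 1)
    (hBx : B * σx = -(σx * B)) (hBz : B * σz = -(σz * B)) : B = σy ∨ B = -σy := by
  rw [eq_smul_σy_of_anticomm hBx hBz] at hB ⊢
  rw [smul_mul_smul_comm, σy_mul_σy] at hB
  have hc : Complex.I * B 0 1 * (Complex.I * B 0 1) = 1 := by simpa using congrFun₂ hB 0 0
  rcases mul_self_eq_one_iff.mp hc with h | h <;> simp [h]

theorem exists_unitary_conj_eq_σx_σz {X Z : Matrix (Fin 2) (Fin 2) ℂ} (hX : X.IsHermitian)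
    (hX2 : X * X = 1) (hZ : Z.IsHermitian) (hXZ : X * Z = -(Z * X)) {v : Fin 2 → ℂ}
    (hv : star v ⬝ᵥ v = 1) (hZv : Z *ᵥ v = v) :
    ∃ U ∈ unitaryGroup (Fin 2) ℂ, U * X * star U = σx ∧ U * Z * star U = σz := by
  have hXU : X ∈ unitaryGroup (Fin 2) ℂ :=
    mem_unitaryGroup_iff'.mpr (by rw [star_eq_conjTranspose, hX.eq, hX2])
  set w := X *ᵥ v with hXv
  have hXw : X *ᵥ w = v := by rw [mulVec_mulVec, hX2, one_mulVec]
  have hZw : Z *ᵥ w = -w := by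
    rw [mulVec_mulVec, ← neg_neg (Z * X), ← hXZ, neg_mulVec, ← mulVec_mulVec, hZv]
  have hw : star w ⬝ᵥ w = 1 := (star_mulVec_dotProduct_mulVec_of_mem_unitaryGroup hXU v v).trans hv
  have hvw : star v ⬝ᵥ w = 0 := hZ.star_dotProduct_eq_zero_of_mulVec_eq_neg hZv hZw
  have hwv : star w ⬝ᵥ v = 0 := by rw [star_dotProduct, hvw, star_zero]
  set V := (of ![v, w])ᵀ
  have hV : ∀ W, Vᴴ * W * V =
      !![star v ⬝ᵥ (W *ᵥ v), star v ⬝ᵥ (W *ᵥ w); star w ⬝ᵥ (W *ᵥ v), star w ⬝ᵥ (W *ᵥ w)] := by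
    intro W
    ext a b
    fin_cases a <;> fin_cases b <;> exact conjTranspose_mul_mul_apply V W _ _
  refine ⟨Vᴴ, ?_, ?_, ?_⟩ <;>
    simp only [mem_unitaryGroup_iff, star_eq_conjTranspose, conjTranspose_conjTranspose]
  · rw [← Matrix.mul_one Vᴴ, hV, one_mulVec, one_mulVec, hv, hvw, hwv, hw, one_fin_two]
  · rw [hV, ← hXv, hXw, hv, hvw, hwv, hw, σx]
  · rw [hV, hZv, hZw, dotProduct_neg, dotProduct_neg, hv, hvw, hwv, hw, σz, neg_zero]

theorem anticommuting_qubit_triple_unitarily_pauli_general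
    (X Y Z : Matrix (Fin 2) (Fin 2) ℂ)
    (hX : X.IsHermitian) (hZ : Z.IsHermitian)
    (hX2 : X * X = 1) (hY2 : Y * Y = 1) (hZ2 : Z * Z = 1)
    (hXY : X * Y = - (Y * X)) (hXZ : X * Z = - (Z * X)) (hYZ : Y * Z = - (Z * Y)) :
    ∃ U ∈ Matrix.unitaryGroup (Fin 2) ℂ,
      U * X * star U = σx ∧ U * Z * star U = σz ∧
      (U * Y * star U = σy ∨ U * Y * star U = -σy) := by
  obtain ⟨v, hv, hZv⟩ :=
    exists_mulVec_eq_self_of_mul_self_eq_one hZ2 (ne_neg_one_of_mul_eq_neg_mul hX2 hXZ)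
  obtain ⟨c, hc⟩ := exists_star_smul_dotProduct_smul_eq_one hv
  obtain ⟨U, hU, hUX, hUZ⟩ :=
    exists_unitary_conj_eq_σx_σz hX hX2 hZ hXZ hc (by rw [mulVec_smul, hZv])
  set φ := Unitary.conjStarAlgAut ℂ (Matrix (Fin 2) (Fin 2) ℂ) ⟨U, hU⟩
  have hφ (A : Matrix (Fin 2) (Fin 2) ℂ) : U * A * star U = φ A := rfl
  rw [hφ] at hUX hUZ
  refine ⟨U, hU, hUX, hUZ, ?_⟩
  rw [hφ]
  refine eq_σy_or_eq_neg_σy_of_anticomm ?_ ?_ ?_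
  · rw [← map_mul, hY2, map_one]
  · rw [← hUX, ← map_mul, ← map_mul, neg_eq_iff_eq_neg.mp hXY.symm, map_neg]
  · rw [← hUZ, ← map_mul, ← map_mul, hYZ, map_neg]

/-- Three pairwise-anticommuting ±1-observables on a qubit are unitarily equivalent to
`{σx, ±σy, σz}`. -/
theorem anticommuting_qubit_triple_unitarily_pauli
    (X Y Z : Matrix (Fin 2) (Fin 2) ℂ)
    (hX : X.IsHermitian) (hY : Y.IsHermitian) (hZ : Z.IsHermitian)
    (hX2 : X * X = 1) (hY2 : Y * Y = 1) (hZ2 : Z * Z = 1)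
    (hXY : X * Y = - (Y * X)) (hXZ : X * Z = - (Z * X)) (hYZ : Y * Z = - (Z * Y)) :
    ∃ U ∈ Matrix.unitaryGroup (Fin 2) ℂ,
      U * X * star U = σx ∧ U * Z * star U = σz ∧
      (U * Y * star U = σy ∨ U * Y * star U = -σy) :=
  anticommuting_qubit_triple_unitarily_pauli_general X Y Z hX hZ hX2 hY2 hZ2 hXY hXZ hYZ
end
end

section
/- If ρ is a separable state on H_A ⊗ H_B, then the state (T ⊗ id)(ρ), obtained by transposing the first subsystem, is also separable (and in particular positive semidefinite). -/
open Matrix Kronecker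
open scoped ComplexOrder

noncomputable section

/-- A bipartite state is separable if it is a convex combination of product states. -/
def SeparableState {m n : Type*} [Fintype m] [Fintype n] [DecidableEq m] [DecidableEq n]
    (ρ : Matrix (m × n) (m × n) ℂ) : Prop :=
  ∃ (k : ℕ) (p : Fin k → ℝ) (σ : Fin k → Matrix m m ℂ) (τ : Fin k → Matrix n n ℂ),
    (∀ i, 0 ≤ p i) ∧ (∑ i, p i) = 1 ∧
    (∀ i, (σ i).PosSemidef ∧ (σ i).trace = 1) ∧
    (∀ i, (τ i).PosSemidef ∧ (τ i).trace = 1) ∧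
    ρ = ∑ i, (p i : ℂ) • (σ i ⊗ₖ τ i)

/-- Partial transpose of the first subsystem, in the computational basis. -/
def ptA {m n : Type*} (ρ : Matrix (m × n) (m × n) ℂ) : Matrix (m × n) (m × n) ℂ :=
  fun i k => ρ (k.1, i.2) (i.1, k.2)

section PartialTranspose

variable {m n : Type*}

theorem ptA_kronecker (A : Matrix m m ℂ) (B : Matrix n n ℂ) : ptA (A ⊗ₖ B) = Aᵀ ⊗ₖ B := rfl

theorem ptA_smul (c : ℂ) (ρ : Matrix (m × n) (m × n) ℂ) : ptA (c • ρ) = c • ptA ρ := rfl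

theorem ptA_sum {ι : Type*} (s : Finset ι) (ρ : ι → Matrix (m × n) (m × n) ℂ) :
    ptA (∑ i ∈ s, ρ i) = ∑ i ∈ s, ptA (ρ i) := by
  ext
  simp only [ptA, Matrix.sum_apply]

end PartialTranspose

section Separable

variable {m n : Type*} [Fintype m] [Fintype n] [DecidableEq m] [DecidableEq n]
  {ρ : Matrix (m × n) (m × n) ℂ}

theorem SeparableState.posSemidef (h : SeparableState ρ) : ρ.PosSemidef := by
  obtain ⟨k, p, σ, τ, hp, -, hσ, hτ, rfl⟩ := h
  exact posSemidef_sum _ fun i _ =>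
    ((hσ i).1.kronecker (hτ i).1).smul (by exact_mod_cast hp i : (0 : ℂ) ≤ p i)

/-- Transposition preserves states, so `(T ⊗ id)(σ ⊗ τ) = σᵀ ⊗ τ` is again a product state. -/
theorem separableState_ptA (h : SeparableState ρ) : SeparableState (ptA ρ) := by
  obtain ⟨k, p, σ, τ, hp, hp_sum, hσ, hτ, rfl⟩ := h
  refine ⟨k, p, fun i => (σ i)ᵀ, τ, hp, hp_sum,
    fun i => ⟨(hσ i).1.transpose, (trace_transpose _).trans (hσ i).2⟩, hτ, ?_⟩
  simp only [ptA_sum, ptA_smul, ptA_kronecker]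

end Separable

/-- If `ρ` is separable then so is its partial transpose `(T ⊗ id)(ρ)`; in particular the
partial transpose is positive semidefinite. -/
theorem separable_partial_transpose {m n : Type*}
    [Fintype m] [Fintype n] [DecidableEq m] [DecidableEq n]
    (ρ : Matrix (m × n) (m × n) ℂ) (h : SeparableState ρ) :
    SeparableState (ptA ρ) ∧ (ptA ρ).PosSemidef :=
  ⟨separableState_ptA h, (separableState_ptA h).posSemidef⟩
end
end

section
/- Let W = Σ_{cdzw} ω_{cd}^{zw} π_{c|z} ⊗ π_{d|w} be an entanglement witness on ℂ²⊗ℂ² (tr(Wρ) ≥ 0 for all separable ρ), and suppose the network probabilities are given by the ideal quantum realization p(c,+,+,d|z,⋆,⋆,w) = tr[(π_{c|z}⊗|Φ⁺⟩⟨Φ⁺|⊗|Φ⁺⟩⟨Φ⁺|⊗π_{d|w}) · (|Φ⁺⟩⟨Φ⁺| ⊗ ρ̃ ⊗ |Φ⁺⟩⟨Φ⁺|)] where the measurement operators act on subsystems (C, A₀A, BB₀, D) and the states live on (CA₀, AB, B₀D). Then the inequality value I = Σ_{cdzw} ω_{cd}^{zw} p(c,+,+,d|z,⋆,⋆,w)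 equals (1/16)·tr(W ρ̃^{AB}). -/
open Matrix Kronecker
open scoped ComplexOrder

noncomputable section

def pauli : Fin 3 → Matrix (Fin 2) (Fin 2) ℂ
  | 0 => σz
  | 1 => σx
  | 2 => σy

def sgn : Fin 2 → ℂ
  | 0 => 1
  | 1 => -1

/-- The Pauli eigenprojectors `π_{c|z} = (I + c σ_z)/2`. -/
def pproj (c : Fin 2) (j : Fin 3) : Matrix (Fin 2) (Fin 2) ℂ :=
  (1 / 2 : ℂ) • (1 + sgn c • pauli j)

/-- `|Φ⁺⟩ = (|00⟩+|11⟩)/√2`. -/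
def phi : Fin 2 × Fin 2 → ℂ := fun p => if p.1 = p.2 then ((Real.sqrt 2 : ℝ) : ℂ)⁻¹ else 0

/-- The projector `|Φ⁺⟩⟨Φ⁺|`. -/
def phiP : Matrix (Fin 2 × Fin 2) (Fin 2 × Fin 2) ℂ := vecMulVec phi (star phi)

/-- Six-qubit index, ordered as subsystems `C, A₀, A, B, B₀, D`. -/
abbrev Q6 := Fin 2 × Fin 2 × Fin 2 × Fin 2 × Fin 2 × Fin 2

/-- The measurement operator `π_{c|z}^C ⊗ |Φ⁺⟩⟨Φ⁺|^{A₀A} ⊗ |Φ⁺⟩⟨Φ⁺|^{BB₀} ⊗ π_{d|w}^D`. -/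
def Meas (c : Fin 2) (z : Fin 3) (d : Fin 2) (w : Fin 3) : Matrix Q6 Q6 ℂ :=
  fun i k =>
    pproj c z i.1 k.1 *
      phiP (i.2.1, i.2.2.1) (k.2.1, k.2.2.1) *
      phiP (i.2.2.2.1, i.2.2.2.2.1) (k.2.2.2.1, k.2.2.2.2.1) *
      pproj d w i.2.2.2.2.2 k.2.2.2.2.2

/-- The network state `|Φ⁺⟩⟨Φ⁺|^{CA₀} ⊗ ρt^{AB} ⊗ |Φ⁺⟩⟨Φ⁺|^{B₀D}`. -/
def NetState (ρ : Matrix (Fin 2 × Fin 2) (Fin 2 × Fin 2) ℂ) : Matrix Q6 Q6 ℂ :=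
  fun i k =>
    phiP (i.1, i.2.1) (k.1, k.2.1) *
      ρ (i.2.2.1, i.2.2.2.1) (k.2.2.1, k.2.2.2.1) *
      phiP (i.2.2.2.2.1, i.2.2.2.2.2) (k.2.2.2.2.1, k.2.2.2.2.2)

/-- The ideal network probabilities `p(c,+,+,d|z,⋆,⋆,w)`. -/
def netProb (ρ : Matrix (Fin 2 × Fin 2) (Fin 2 × Fin 2) ℂ)
    (c : Fin 2) (z : Fin 3) (d : Fin 2) (w : Fin 3) : ℂ :=
  (Meas c z d w * NetState ρ).trace

lemma phiP_apply (p q : Fin 2 × Fin 2) :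
    phiP p q = if p.1 = p.2 ∧ q.1 = q.2 then (1/2 : ℂ) else 0 := by
  have h2 : (((Real.sqrt 2 : ℝ) : ℂ))⁻¹ * (((Real.sqrt 2 : ℝ) : ℂ))⁻¹ = 1/2 := by
    rw [← mul_inv, ← Complex.ofReal_mul, Real.mul_self_sqrt (by norm_num)]
    norm_num
  simp only [phiP, vecMulVec_apply, Pi.star_apply, phi]
  split_ifs with h1 h2' h3 <;>
    simp_all [apply_ite (star : ℂ → ℂ), Complex.star_def, map_inv₀, Complex.conj_ofReal]

set_option maxHeartbeats 4000000 in
lemma netProb_eq (ρ : Matrix (Fin 2 × Fin 2) (Fin 2 × Fin 2) ℂ)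
    (c : Fin 2) (z : Fin 3) (d : Fin 2) (w : Fin 3) :
    netProb ρ c z d w = (1 / 16 : ℂ) * ((pproj c z ⊗ₖ pproj d w) * ρ).trace := by
  simp (config := { maxSteps := 10000000 }) only [netProb, Matrix.trace, Matrix.diag,
    Matrix.mul_apply, Meas, NetState, phiP_apply, Matrix.kroneckerMap_apply,
    Fintype.sum_prod_type]
  simp (config := { maxSteps := 10000000 }) only [ite_and, ite_mul, mul_ite, zero_mul,
    mul_zero, Finset.sum_ite_eq, Finset.sum_ite_eq', Finset.mem_univ, if_true,
    Finset.sum_const_zero]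
  simp only [Fin.sum_univ_two, Fin.isValue, one_ne_zero, zero_ne_one, and_true, and_false,
    true_and, false_and, and_self, if_true, if_false, reduceIte, zero_mul, mul_zero,
    zero_add, add_zero]
  ring

/-- For the ideal network realization, the MDIEW-type expression
`I = Σ ω_{cd}^{zw} p(c,+,+,d|z,⋆,⋆,w)` equals `(1/16)·tr(W ρt)`, where
`W = Σ ω_{cd}^{zw} π_{c|z} ⊗ π_{d|w}` is an entanglement witness. -/
theorem ideal_network_value (ω : Fin 2 → Fin 3 → Fin 2 → Fin 3 → ℝ)
    (W : Matrix (Fin 2 × Fin 2) (Fin 2 × Fin 2) ℂ)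
    (hWdef : W = ∑ c : Fin 2, ∑ z : Fin 3, ∑ d : Fin 2, ∑ w : Fin 3,
      (ω c z d w : ℂ) • (pproj c z ⊗ₖ pproj d w))
    (hWitness : ∀ ρ : Matrix (Fin 2 × Fin 2) (Fin 2 × Fin 2) ℂ,
      SeparableState ρ → 0 ≤ (W * ρ).trace)
    (ρt : Matrix (Fin 2 × Fin 2) (Fin 2 × Fin 2) ℂ)
    (hρ : ρt.PosSemidef) (hρtr : ρt.trace = 1) :
    (∑ c : Fin 2, ∑ z : Fin 3, ∑ d : Fin 2, ∑ w : Fin 3,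
      (ω c z d w : ℂ) * netProb ρt c z d w) = (1 / 16 : ℂ) * (W * ρt).trace := by
  subst hWdef
  simp only [netProb_eq, Matrix.sum_mul, Matrix.smul_mul, Matrix.trace_sum, Matrix.trace_smul,
    smul_eq_mul, Finset.mul_sum]
  refine Finset.sum_congr rfl fun c _ => Finset.sum_congr rfl fun z _ =>
    Finset.sum_congr rfl fun d _ => Finset.sum_congr rfl fun w _ => ?_
  ring
end
end
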